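/- arXiv:2209.13424 — 4 statements merged into one kernel-verified Lean document; each statement's English description precedes it below -/
import Mathlib

section
/- Let Λ < π² be a real number and let f : [0,1] → ℝ be continuous on [0,1], twice continuously differentiable on (0,1), and nonnegative. Then the following are equivalent: (1) f''(t) + Λ f(t) ≥ 0 for every t ∈ (0,1); (2) for all t, s₀, s₁ ∈ [0,1], f((1−t)s₀ + t s₁) ≤ σ_Λ^{(1−t)}(|s₀−s₁|) f(s₀) + σ_Λ^{(t)}(|s₀−s₁|) f(s₁). -/
/-!
Along the segment from `s₀` to `s₁`, `g(τ) = f((1 - τ) s₀ + τ s₁)` satisfies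
`g'' + c g ≥ 0` with `c = Λ |s₀ - s₁|² < π²`, while
`τ ↦ σ_Λ^{(1-τ)}(|s₀ - s₁|) f(s₀) + σ_Λ^{(τ)}(|s₀ - s₁|) f(s₁)` solves `u'' + c u = 0` with the
same boundary values. Since `c < π²` there is a positive solution of `u'' + c u = 0` on `[0, 1]`,
and the maximum principle it provides (via the Wronskian) gives `g ≤ u`. Conversely, the
midpoint inequality with `σ^{(1/2)}(2ε) = 1 / (2 cos (ε √Λ))` (or `cosh`) bounds the second
difference `f(x - ε) + f(x + ε) - 2 f(x)` below by `-Λ ε² f(x)`, which is incompatible with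
`f'' < -Λ f(x)` near `x`.
-/

/-- Distortion coefficient `σ_Λ^{(t)}(θ)`. -/
noncomputable def sigmaCoeff (Λ t θ : ℝ) : ℝ :=
  if Λ * θ ^ 2 = 0 then t
  else if 0 < Λ * θ ^ 2 then
    Real.sin (t * (θ * Real.sqrt Λ)) / Real.sin (θ * Real.sqrt Λ)
  else
    Real.sinh (t * (θ * Real.sqrt (-Λ))) / Real.sinh (θ * Real.sqrt (-Λ))

open Real Set Topology

section Oscillator

def SolvesOscillator (c : ℝ) (u : ℝ → ℝ) : Prop :=
  ∃ u' u'' : ℝ → ℝ, (∀ t, HasDerivAt u (u' t) t) ∧ (∀ t, HasDerivAt u' (u'' t) t) ∧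
    ∀ t, u'' t + c * u t = 0

variable {c : ℝ} {u v : ℝ → ℝ}

namespace SolvesOscillator

lemma add (hu : SolvesOscillator c u) (hv : SolvesOscillator c v) :
    SolvesOscillator c (fun t => u t + v t) := by
  obtain ⟨u', u'', hu₁, hu₂, hu⟩ := hu
  obtain ⟨v', v'', hv₁, hv₂, hv⟩ := hv
  exact ⟨fun t => u' t + v' t, fun t => u'' t + v'' t, fun t => (hu₁ t).add (hv₁ t),
    fun t => (hu₂ t).add (hv₂ t), fun t => by linear_combination hu t + hv t⟩

lemma mul_const (hu : SolvesOscillator c u) (k : ℝ) :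
    SolvesOscillator c (fun t => u t * k) := by
  obtain ⟨u', u'', hu₁, hu₂, hu⟩ := hu
  exact ⟨fun t => u' t * k, fun t => u'' t * k, fun t => (hu₁ t).mul_const k,
    fun t => (hu₂ t).mul_const k, fun t => by linear_combination k * hu t⟩

lemma comp_one_sub (hu : SolvesOscillator c u) : SolvesOscillator c (fun t => u (1 - t)) := by
  obtain ⟨u', u'', hu₁, hu₂, hu⟩ := hu
  refine ⟨fun t => -u' (1 - t), fun t => u'' (1 - t), fun t => (hu₁ (1 - t)).comp_const_sub 1 t,
    fun t => ?_, fun t => hu (1 - t)⟩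
  simpa using ((hu₂ (1 - t)).comp_const_sub 1 t).fun_neg

end SolvesOscillator

lemma solvesOscillator_id : SolvesOscillator 0 (fun t => t) :=
  ⟨fun _ => 1, fun _ => 0, hasDerivAt_id, fun t => hasDerivAt_const t 1, fun _ => by ring⟩

lemma solvesOscillator_sin (a : ℝ) : SolvesOscillator (a ^ 2) (fun t => sin (t * a)) := by
  refine ⟨fun t => cos (t * a) * a, fun t => -sin (t * a) * a * a, fun t => ?_, fun t => ?_,
    fun t => by ring⟩
  · exact (hasDerivAt_sin (t * a)).comp t (hasDerivAt_mul_const a)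
  · exact ((hasDerivAt_cos (t * a)).comp t (hasDerivAt_mul_const a)).mul_const a

lemma solvesOscillator_sinh (a : ℝ) : SolvesOscillator (-a ^ 2) (fun t => sinh (t * a)) := by
  refine ⟨fun t => cosh (t * a) * a, fun t => sinh (t * a) * a * a, fun t => ?_, fun t => ?_,
    fun t => by ring⟩
  · exact (hasDerivAt_sinh (t * a)).comp t (hasDerivAt_mul_const a)
  · exact ((hasDerivAt_cosh (t * a)).comp t (hasDerivAt_mul_const a)).mul_const a

end Oscillator

section Sigma

variable {c : ℝ}

lemma sigmaCoeff_eq_sigmaCoeff_one (Λ t : ℝ) {θ : ℝ} (hθ : 0 ≤ θ) :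
    sigmaCoeff Λ t θ = sigmaCoeff (Λ * θ ^ 2) t 1 := by
  have hpos : θ * √Λ = √(Λ * θ ^ 2) := by rw [sqrt_mul' _ (sq_nonneg θ), sqrt_sq hθ, mul_comm]
  have hneg : θ * √(-Λ) = √(-(Λ * θ ^ 2)) := by
    rw [← neg_mul, sqrt_mul' _ (sq_nonneg θ), sqrt_sq hθ, mul_comm]
  simp only [sigmaCoeff, one_pow, mul_one, one_mul, hpos, hneg]

lemma sqrt_lt_pi_of_lt_pi_sq (hc : c < π ^ 2) : √c < π := (sqrt_lt' pi_pos).2 hc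

lemma sigmaCoeff_zero (Λ θ : ℝ) : sigmaCoeff Λ 0 θ = 0 := by
  simp [sigmaCoeff]

lemma sigmaCoeff_one (hc : c < π ^ 2) : sigmaCoeff c 1 1 = 1 := by
  simp only [sigmaCoeff, one_pow, mul_one, one_mul]
  split_ifs with h0 hpos
  · rfl
  · exact div_self (sin_pos_of_pos_of_lt_pi (sqrt_pos.2 hpos) (sqrt_lt_pi_of_lt_pi_sq hc)).ne'
  · exact div_self (sinh_pos_iff.2 (sqrt_pos.2 (neg_pos.2 ((not_lt.1 hpos).lt_of_ne h0)))).ne'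

lemma sigmaCoeff_pos (hc : c < π ^ 2) {t : ℝ} (ht₀ : 0 < t) (ht₁ : t ≤ 1) :
    0 < sigmaCoeff c t 1 := by
  simp only [sigmaCoeff, one_pow, mul_one, one_mul]
  split_ifs with h0 hpos
  · exact ht₀
  · have ha := sqrt_pos.2 hpos
    have hπ := sqrt_lt_pi_of_lt_pi_sq hc
    exact div_pos (sin_pos_of_pos_of_lt_pi (by positivity) (by nlinarith))
      (sin_pos_of_pos_of_lt_pi ha hπ)
  · have ha := sqrt_pos.2 (neg_pos.2 ((not_lt.1 hpos).lt_of_ne h0))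
    exact div_pos (sinh_pos_iff.2 (by positivity)) (sinh_pos_iff.2 ha)

lemma sigmaCoeff_nonneg (hc : c < π ^ 2) {t : ℝ} (ht : t ∈ Icc (0 : ℝ) 1) :
    0 ≤ sigmaCoeff c t 1 := by
  rcases ht.1.eq_or_lt with rfl | ht₀
  · exact (sigmaCoeff_zero c 1).ge
  · exact (sigmaCoeff_pos hc ht₀ ht.2).le

lemma solvesOscillator_sigmaCoeff (c : ℝ) : SolvesOscillator c (fun t => sigmaCoeff c t 1) := by
  simp only [sigmaCoeff, one_pow, mul_one, one_mul]
  split_ifs with h0 hpos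
  · exact h0 ▸ solvesOscillator_id
  · simpa [div_eq_mul_inv, sq_sqrt hpos.le] using
      (solvesOscillator_sin √c).mul_const (sin √c)⁻¹
  · simp only [div_eq_mul_inv]
    convert (solvesOscillator_sinh √(-c)).mul_const (sinh √(-c))⁻¹ using 1
    rw [sq_sqrt (neg_nonneg.2 (not_lt.1 hpos)), neg_neg]

lemma one_add_sq_div_two_le_cosh (x : ℝ) : 1 + x ^ 2 / 2 ≤ cosh x := by
  rw [← cosh_abs, ← sq_abs]
  have hsinh : |x| / 2 ≤ sinh (|x| / 2) := self_le_sinh_iff.2 (by positivity)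
  have hcosh := cosh_two_mul (|x| / 2)
  rw [mul_div_cancel₀ _ two_ne_zero, cosh_sq] at hcosh
  nlinarith [abs_nonneg x]

/-- `σ^{(1/2)} = 1 / (2 cos (√c / 2))`, and `cos y ≥ 1 - y² / 2` (resp. `cosh y ≥ 1 + y² / 2`). -/
lemma two_sub_div_four_le_inv_sigmaCoeff_half (hc : c < π ^ 2) :
    2 - c / 4 ≤ (sigmaCoeff c (1 / 2) 1)⁻¹ := by
  simp only [sigmaCoeff, one_pow, mul_one, one_mul]
  split_ifs with h0 hpos
  · rw [h0]; norm_num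
  · have hsin : 0 < sin (√c / 2) :=
      sin_pos_of_pos_of_lt_pi (by have := sqrt_pos.2 hpos; positivity) (by linarith [pi_pos, sqrt_lt_pi_of_lt_pi_sq hc])
    rw [show √c = 2 * (√c / 2) by ring, sin_two_mul, show 1 / 2 * (2 * (√c / 2)) = √c / 2 by ring,
      inv_div, mul_right_comm, mul_div_cancel_right₀ _ hsin.ne']
    nlinarith [one_sub_sq_div_two_le_cos (x := √c / 2), sq_sqrt hpos.le]
  · have hc' : 0 < -c := neg_pos.2 ((not_lt.1 hpos).lt_of_ne h0)
    have hsinh : 0 < sinh (√(-c) / 2) := sinh_pos_iff.2 (by have := sqrt_pos.2 hc'; positivity)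
    rw [show √(-c) = 2 * (√(-c) / 2) by ring, sinh_two_mul,
      show 1 / 2 * (2 * (√(-c) / 2)) = √(-c) / 2 by ring, inv_div, mul_right_comm,
      mul_div_cancel_right₀ _ hsinh.ne']
    nlinarith [one_add_sq_div_two_le_cosh (√(-c) / 2), sq_sqrt hc'.le]

end Sigma

section Comparison

variable {c : ℝ}

noncomputable def sigmaInterp (c y₀ y₁ t : ℝ) : ℝ :=
  sigmaCoeff c (1 - t) 1 * y₀ + sigmaCoeff c t 1 * y₁

lemma solvesOscillator_sigmaInterp (c y₀ y₁ : ℝ) : SolvesOscillator c (sigmaInterp c y₀ y₁) :=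
  ((solvesOscillator_sigmaCoeff c).comp_one_sub.mul_const y₀).add
    ((solvesOscillator_sigmaCoeff c).mul_const y₁)

lemma sigmaInterp_zero (hc : c < π ^ 2) (y₀ y₁ : ℝ) : sigmaInterp c y₀ y₁ 0 = y₀ := by
  simp [sigmaInterp, sigmaCoeff_one hc, sigmaCoeff_zero]

lemma sigmaInterp_one (hc : c < π ^ 2) (y₀ y₁ : ℝ) : sigmaInterp c y₀ y₁ 1 = y₁ := by
  simp [sigmaInterp, sigmaCoeff_one hc, sigmaCoeff_zero]

lemma sigmaInterp_pos (hc : c < π ^ 2) {y₀ y₁ t : ℝ} (hy₀ : 0 < y₀) (hy₁ : 0 < y₁)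
    (ht : t ∈ Icc (0 : ℝ) 1) : 0 < sigmaInterp c y₀ y₁ t := by
  rcases ht.1.eq_or_lt with rfl | ht₀
  · rwa [sigmaInterp_zero hc]
  · exact add_pos_of_nonneg_of_pos
      (mul_nonneg (sigmaCoeff_nonneg hc ⟨sub_nonneg.2 ht.2, by linarith⟩) hy₀.le)
      (mul_pos (sigmaCoeff_pos hc ht₀ ht.2) hy₁)

variable {φ φ' φ'' h h' h'' : ℝ → ℝ}

/-- The derivative of the Wronskian is `φ (h'' + c h)`. -/
lemma antitoneOn_wronskian (hφ' : ∀ t, HasDerivAt φ (φ' t) t)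
    (hφ'' : ∀ t, HasDerivAt φ' (φ'' t) t) (hφ : ∀ t, φ'' t + c * φ t = 0)
    (hφpos : ∀ t ∈ Ioo (0 : ℝ) 1, 0 ≤ φ t)
    (hh' : ∀ t ∈ Ioo (0 : ℝ) 1, HasDerivAt h (h' t) t)
    (hh'' : ∀ t ∈ Ioo (0 : ℝ) 1, HasDerivAt h' (h'' t) t)
    (hsuper : ∀ t ∈ Ioo (0 : ℝ) 1, h'' t + c * h t ≤ 0) :
    AntitoneOn (fun t => h' t * φ t - h t * φ' t) (Ioo 0 1) := by
  have hderiv : ∀ t ∈ Ioo (0 : ℝ) 1,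
      HasDerivAt (fun t => h' t * φ t - h t * φ' t) (φ t * (h'' t + c * h t)) t := fun t ht =>
    (((hh'' t ht).mul (hφ' t)).sub ((hh' t ht).mul (hφ'' t))).congr_deriv
      (by linear_combination (-h t) * hφ t)
  have hdiff : DifferentiableOn ℝ (fun t => h' t * φ t - h t * φ' t) (Ioo 0 1) :=
    fun t ht => (hderiv t ht).differentiableAt.differentiableWithinAt
  refine antitoneOn_of_deriv_nonpos (convex_Ioo 0 1) hdiff.continuousOn
    (by rwa [interior_Ioo]) fun t ht => ?_
  rw [interior_Ioo] at ht
  rw [(hderiv t ht).deriv]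
  exact mul_nonpos_of_nonneg_of_nonpos (hφpos t ht) (hsuper t ht)

/-- If `h / φ` took a negative value at `x`, the mean value theorem on `[0, x]` and `[x, 1]`
would make the Wronskian negative before `x` and positive after it. -/
lemma SolvesOscillator.nonneg_of_supersolution (hφ : SolvesOscillator c φ)
    (hφpos : ∀ t ∈ Icc (0 : ℝ) 1, 0 < φ t) (hh : ContinuousOn h (Icc 0 1))
    (hh' : ∀ t ∈ Ioo (0 : ℝ) 1, HasDerivAt h (h' t) t)
    (hh'' : ∀ t ∈ Ioo (0 : ℝ) 1, HasDerivAt h' (h'' t) t)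
    (hsuper : ∀ t ∈ Ioo (0 : ℝ) 1, h'' t + c * h t ≤ 0) (h₀ : h 0 = 0) (h₁ : h 1 = 0) :
    ∀ t ∈ Icc (0 : ℝ) 1, 0 ≤ h t := by
  obtain ⟨φ', φ'', hφ', hφ'', hφ⟩ := hφ
  set w := fun t => h' t * φ t - h t * φ' t
  have hw := antitoneOn_wronskian hφ' hφ'' hφ (fun t ht => (hφpos t (Ioo_subset_Icc_self ht)).le)
    hh' hh'' hsuper
  intro x hx
  by_contra! hx_neg
  have hx₀ : 0 < x := hx.1.lt_of_ne (by rintro rfl; exact hx_neg.ne h₀)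
  have hx₁ : x < 1 := hx.2.lt_of_ne (by rintro rfl; exact hx_neg.ne h₁)
  have hv : ContinuousOn (fun t => h t / φ t) (Icc 0 1) :=
    hh.div (fun t _ => (hφ' t).continuousAt.continuousWithinAt) fun t ht => (hφpos t ht).ne'
  have hv' : ∀ t ∈ Ioo (0 : ℝ) 1, HasDerivAt (fun t => h t / φ t) (w t / φ t ^ 2) t :=
    fun t ht => (hh' t ht).div (hφ' t) (hφpos t (Ioo_subset_Icc_self ht)).ne'
  obtain ⟨a, ha, ha_slope⟩ := exists_hasDerivAt_eq_slope _ _ hx₀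
    (hv.mono (Icc_subset_Icc le_rfl hx.2)) fun t ht => hv' t ⟨ht.1, ht.2.trans hx₁⟩
  obtain ⟨b, hb, hb_slope⟩ := exists_hasDerivAt_eq_slope _ _ hx₁
    (hv.mono (Icc_subset_Icc hx.1 le_rfl)) fun t ht => hv' t ⟨hx₀.trans ht.1, ht.2⟩
  have hφa := hφpos a ⟨ha.1.le, (ha.2.trans hx₁).le⟩
  have hφb := hφpos b ⟨(hx₀.trans hb.1).le, hb.2.le⟩
  have hφx := hφpos x hx
  have hwa : w a < 0 := by
    have : w a / φ a ^ 2 < 0 := by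
      rw [ha_slope, h₀, zero_div, sub_zero, sub_zero]
      exact div_neg_of_neg_of_pos (div_neg_of_neg_of_pos hx_neg hφx) hx₀
    simpa using (div_lt_iff₀ (by positivity)).1 this
  have hwb : 0 < w b := by
    have : 0 < w b / φ b ^ 2 := by
      rw [hb_slope, h₁, zero_div, zero_sub]
      exact div_pos (neg_pos.2 (div_neg_of_neg_of_pos hx_neg hφx)) (sub_pos.2 hx₁)
    exact (div_pos_iff_of_pos_right (by positivity)).1 this
  have := hw ⟨ha.1, ha.2.trans hx₁⟩ ⟨hx₀.trans hb.1, hb.2⟩ (ha.2.trans hb.1).le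
  linarith

/-- `sigmaInterp c 1 1` is a positive solution, so the maximum principle applies to `u - g`. -/
lemma SolvesOscillator.le_of_subsolution (hc : c < π ^ 2) {u g g' g'' : ℝ → ℝ}
    (hu : SolvesOscillator c u) (hg : ContinuousOn g (Icc 0 1))
    (hg' : ∀ t ∈ Ioo (0 : ℝ) 1, HasDerivAt g (g' t) t)
    (hg'' : ∀ t ∈ Ioo (0 : ℝ) 1, HasDerivAt g' (g'' t) t)
    (hsub : ∀ t ∈ Ioo (0 : ℝ) 1, 0 ≤ g'' t + c * g t) (h₀ : g 0 = u 0) (h₁ : g 1 = u 1) :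
    ∀ t ∈ Icc (0 : ℝ) 1, g t ≤ u t := by
  obtain ⟨u', u'', hu', hu'', hu⟩ := hu
  have hφ := solvesOscillator_sigmaInterp c 1 1
  have key := hφ.nonneg_of_supersolution (fun t ht => sigmaInterp_pos hc one_pos one_pos ht)
    (h := fun t => u t - g t) (h' := fun t => u' t - g' t) (h'' := fun t => u'' t - g'' t)
    ((continuous_iff_continuousAt.2 fun t => (hu' t).continuousAt).continuousOn.sub hg)
    (fun t ht => (hu' t).sub (hg' t ht)) (fun t ht => (hu'' t).sub (hg'' t ht))
    (fun t ht => by linarith [hu t, hsub t ht]) (by simp [h₀]) (by simp [h₁])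
  exact fun t ht => sub_nonneg.1 (key t ht)

end Comparison

lemma mul_sq_lt_pi_sq {Λ θ : ℝ} (hΛ : Λ < π ^ 2) (hθ : |θ| ≤ 1) : Λ * θ ^ 2 < π ^ 2 := by
  have hθ2 : θ ^ 2 ≤ 1 := by nlinarith [sq_abs θ, abs_nonneg θ]
  rcases le_or_gt Λ 0 with hΛ₀ | hΛ₀
  · nlinarith [pi_pos, sq_nonneg θ]
  · nlinarith

lemma one_sub_mul_add_mul_mem_Ioo {s₀ s₁ τ : ℝ} (hs₀ : s₀ ∈ Icc (0 : ℝ) 1)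
    (hs₁ : s₁ ∈ Icc (0 : ℝ) 1) (hne : s₀ ≠ s₁) (hτ : τ ∈ Ioo (0 : ℝ) 1) :
    (1 - τ) * s₀ + τ * s₁ ∈ Ioo (0 : ℝ) 1 := by
  obtain ⟨hτ₀, hτ₁⟩ := hτ
  rcases hne.lt_or_gt with h | h <;> constructor <;>
    nlinarith [hs₀.1, hs₀.2, hs₁.1, hs₁.2, mul_pos hτ₀ (sub_pos.2 hτ₁)]

lemma sigmaConcave_of_subsolution {Λ : ℝ} (hΛ : Λ < π ^ 2) {f f' f'' : ℝ → ℝ}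
    (hf : ContinuousOn f (Icc 0 1))
    (hf' : ∀ t ∈ Ioo (0 : ℝ) 1, HasDerivAt f (f' t) t)
    (hf'' : ∀ t ∈ Ioo (0 : ℝ) 1, HasDerivAt f' (f'' t) t)
    (hsub : ∀ t ∈ Ioo (0 : ℝ) 1, 0 ≤ f'' t + Λ * f t)
    {t s₀ s₁ : ℝ} (ht : t ∈ Icc (0 : ℝ) 1) (hs₀ : s₀ ∈ Icc (0 : ℝ) 1) (hs₁ : s₁ ∈ Icc (0 : ℝ) 1) :
    f ((1 - t) * s₀ + t * s₁) ≤
      sigmaCoeff Λ (1 - t) |s₀ - s₁| * f s₀ + sigmaCoeff Λ t |s₀ - s₁| * f s₁ := by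
  rcases eq_or_ne s₀ s₁ with rfl | hne
  · simp [sigmaCoeff, ← add_mul]
  set c := Λ * |s₀ - s₁| ^ 2
  have hc : c < π ^ 2 := mul_sq_lt_pi_sq hΛ (by rw [abs_abs, abs_le]; constructor <;> linarith
    [hs₀.1, hs₀.2, hs₁.1, hs₁.2])
  rw [sigmaCoeff_eq_sigmaCoeff_one _ _ (abs_nonneg _),
    sigmaCoeff_eq_sigmaCoeff_one _ _ (abs_nonneg _)]
  set p := fun τ : ℝ => (1 - τ) * s₀ + τ * s₁
  have hp : ∀ τ, HasDerivAt p (s₁ - s₀) τ := fun τ =>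
    ((((hasDerivAt_id τ).const_sub 1).mul_const s₀).add
      ((hasDerivAt_id τ).mul_const s₁)).congr_deriv (by ring)
  have hpI : ∀ τ ∈ Ioo (0 : ℝ) 1, p τ ∈ Ioo (0 : ℝ) 1 := fun τ hτ =>
    one_sub_mul_add_mul_mem_Ioo hs₀ hs₁ hne hτ
  refine (solvesOscillator_sigmaInterp c (f s₀) (f s₁)).le_of_subsolution hc
    (g := f ∘ p) (g' := fun τ => f' (p τ) * (s₁ - s₀))
    (g'' := fun τ => f'' (p τ) * (s₁ - s₀) * (s₁ - s₀))
    (hf.comp (by fun_prop) fun τ hτ => ?_)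
    (fun τ hτ => (hf' _ (hpI τ hτ)).comp τ (hp τ))
    (fun τ hτ => ((hf'' _ (hpI τ hτ)).comp τ (hp τ)).mul_const _)
    (fun τ hτ => ?_) (by simp [p, sigmaInterp_zero hc]) (by simp [p, sigmaInterp_one hc]) t ht
  · exact convex_Icc 0 1 hs₀ hs₁ (sub_nonneg.2 hτ.2) hτ.1 (by ring)
  · have := mul_nonneg (sq_nonneg (s₁ - s₀)) (hsub _ (hpI τ hτ))
    simp only [Function.comp_apply, c, sq_abs]
    linear_combination this

/-- `y ↦ f y - M y² / 2` is concave. -/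
lemma add_sub_two_mul_le_of_hasDerivAt {f f' f'' : ℝ → ℝ} {x ε M : ℝ}
    (hf' : ∀ y ∈ Icc (x - ε) (x + ε), HasDerivAt f (f' y) y)
    (hf'' : ∀ y ∈ Icc (x - ε) (x + ε), HasDerivAt f' (f'' y) y)
    (hM : ∀ y ∈ Icc (x - ε) (x + ε), f'' y ≤ M) (hε : 0 ≤ ε) :
    f (x - ε) + f (x + ε) - 2 * f x ≤ M * ε ^ 2 := by
  have hconc : ConcaveOn ℝ (Icc (x - ε) (x + ε)) (fun y => f y - M / 2 * y ^ 2) := by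
    refine concaveOn_of_hasDerivWithinAt2_nonpos (convex_Icc _ _) (f' := fun y => f' y - M * y)
      (f'' := fun y => f'' y - M) ?_ (fun y hy => ?_) (fun y hy => ?_) (fun y hy => ?_)
    · exact ContinuousOn.sub (fun y hy => (hf' y hy).continuousAt.continuousWithinAt)
        (by fun_prop)
    all_goals rw [interior_Icc] at hy
    · exact ((hf' y (Ioo_subset_Icc_self hy)).sub
        (((hasDerivAt_pow 2 y).const_mul (M / 2)).congr_deriv (by ring))).hasDerivWithinAt
    · exact ((hf'' y (Ioo_subset_Icc_self hy)).sub
        (((hasDerivAt_id y).const_mul M).congr_deriv (mul_one M))).hasDerivWithinAt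
    · linarith [hM y (Ioo_subset_Icc_self hy)]
  have := hconc.2 (left_mem_Icc.2 (by linarith)) (right_mem_Icc.2 (by linarith))
    (by norm_num : (0 : ℝ) ≤ 1 / 2) (by norm_num : (0 : ℝ) ≤ 1 / 2) (by norm_num)
  simp only [smul_eq_mul, show 1 / 2 * (x - ε) + 1 / 2 * (x + ε) = x by ring] at this
  nlinarith

lemma subsolution_of_sigmaConcave {Λ : ℝ} (hΛ : Λ < π ^ 2) {f f' f'' : ℝ → ℝ}
    (hf' : ∀ t ∈ Ioo (0 : ℝ) 1, HasDerivAt f (f' t) t)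
    (hf'' : ∀ t ∈ Ioo (0 : ℝ) 1, HasDerivAt f' (f'' t) t)
    (hf''cont : ContinuousOn f'' (Ioo 0 1))
    (hfnonneg : ∀ t ∈ Icc (0 : ℝ) 1, 0 ≤ f t)
    (hconc : ∀ t ∈ Icc (0 : ℝ) 1, ∀ s₀ ∈ Icc (0 : ℝ) 1, ∀ s₁ ∈ Icc (0 : ℝ) 1,
      f ((1 - t) * s₀ + t * s₁) ≤
        sigmaCoeff Λ (1 - t) |s₀ - s₁| * f s₀ + sigmaCoeff Λ t |s₀ - s₁| * f s₁)
    {x : ℝ} (hx : x ∈ Ioo (0 : ℝ) 1) : 0 ≤ f'' x + Λ * f x := by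
  by_contra! hneg
  obtain ⟨M, hfM, hMΛ⟩ := exists_between (show f'' x < -Λ * f x by linarith)
  have hnhds : ∀ᶠ y in 𝓝 x, y ∈ Ioo (0 : ℝ) 1 ∧ f'' y < M :=
    Filter.Eventually.and (Ioo_mem_nhds hx.1 hx.2)
      ((hf''cont.continuousAt (Ioo_mem_nhds hx.1 hx.2)).eventually_lt continuousAt_const hfM)
  obtain ⟨δ, hδ, hball⟩ := Metric.mem_nhds_iff.1 hnhds
  set ε := δ / 2
  have hε : 0 < ε := half_pos hδ
  have hI : ∀ y ∈ Icc (x - ε) (x + ε), y ∈ Ioo (0 : ℝ) 1 ∧ f'' y < M := fun y hy =>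
    hball (Metric.closedBall_subset_ball (half_lt_self hδ) (Real.closedBall_eq_Icc ▸ hy))
  have hI₀ := (hI _ (left_mem_Icc.2 (by linarith))).1
  have hI₁ := (hI _ (right_mem_Icc.2 (by linarith))).1
  have hsecond : f (x - ε) + f (x + ε) - 2 * f x ≤ M * ε ^ 2 :=
    add_sub_two_mul_le_of_hasDerivAt (fun y hy => hf' y (hI y hy).1)
      (fun y hy => hf'' y (hI y hy).1) (fun y hy => (hI y hy).2.le) hε.le
  have hmid := hconc (1 / 2) (by norm_num) _ (Ioo_subset_Icc_self hI₀) _ (Ioo_subset_Icc_self hI₁)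
  rw [show (1 - 1 / 2) * (x - ε) + 1 / 2 * (x + ε) = x by ring,
    show (1 : ℝ) - 1 / 2 = 1 / 2 by norm_num,
    show |x - ε - (x + ε)| = 2 * ε by rw [abs_of_neg (by linarith)]; ring,
    sigmaCoeff_eq_sigmaCoeff_one _ _ (by linarith), ← mul_add] at hmid
  have hc : Λ * (2 * ε) ^ 2 < π ^ 2 :=
    mul_sq_lt_pi_sq hΛ (by rw [abs_of_pos (by linarith)]; linarith [hI₀.1, hI₁.2])
  have hσ := sigmaCoeff_pos hc (by norm_num : (0 : ℝ) < 1 / 2) (by norm_num)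
  have hσinv := two_sub_div_four_le_inv_sigmaCoeff_half hc
  have hfx := hfnonneg x (Ioo_subset_Icc_self hx)
  have hlower : (2 - Λ * ε ^ 2) * f x ≤ f (x - ε) + f (x + ε) := calc
    (2 - Λ * ε ^ 2) * f x = (2 - Λ * (2 * ε) ^ 2 / 4) * f x := by ring
    _ ≤ (sigmaCoeff (Λ * (2 * ε) ^ 2) (1 / 2) 1)⁻¹ * f x := by gcongr
    _ ≤ f (x - ε) + f (x + ε) := by rwa [inv_mul_le_iff₀ hσ]
  have hMε : M * ε ^ 2 < -Λ * f x * ε ^ 2 := by gcongr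
  linarith

/-- One-dimensional comparison: `f'' + Λ f ≥ 0` on `(0,1)` is equivalent to
`σ`-concavity of `f`, for `Λ < π²`. -/
theorem stmt_0 (Λ : ℝ) (hΛ : Λ < Real.pi ^ 2)
    (f f' f'' : ℝ → ℝ)
    (hf : ContinuousOn f (Set.Icc 0 1))
    (hf' : ∀ t ∈ Set.Ioo (0 : ℝ) 1, HasDerivAt f (f' t) t)
    (hf'' : ∀ t ∈ Set.Ioo (0 : ℝ) 1, HasDerivAt f' (f'' t) t)
    (hf''cont : ContinuousOn f'' (Set.Ioo 0 1))
    (hfnonneg : ∀ t ∈ Set.Icc (0 : ℝ) 1, 0 ≤ f t) :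
    (∀ t ∈ Set.Ioo (0 : ℝ) 1, 0 ≤ f'' t + Λ * f t) ↔
      (∀ t ∈ Set.Icc (0 : ℝ) 1, ∀ s₀ ∈ Set.Icc (0 : ℝ) 1, ∀ s₁ ∈ Set.Icc (0 : ℝ) 1,
        f ((1 - t) * s₀ + t * s₁) ≤
          sigmaCoeff Λ (1 - t) |s₀ - s₁| * f s₀ + sigmaCoeff Λ t |s₀ - s₁| * f s₁) :=
  ⟨fun hsub _ ht _ hs₀ _ hs₁ => sigmaConcave_of_subsolution hΛ hf hf' hf'' hsub ht hs₀ hs₁,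
    fun hconc _ hx => subsolution_of_sigmaConcave hΛ hf' hf'' hf''cont hfnonneg hconc hx⟩
end

section
/- Let Λ̄ ∈ ℝ and let f, g : [0,1] → ℝ be continuous on [0,1] and twice differentiable on (0,1). Assume that g > 0 on [0,1], that f''(t) + Λ̄ f(t) > 0 for every t ∈ (0,1), that g''(t) + Λ̄ g(t) = 0 for every t ∈ (0,1), and that f(0) ≤ g(0) and f(1) ≤ g(1). Then f(t) ≤ g(t) for every t ∈ [0,1]; equivalently, the maximum of f/g on [0,1] is attained at an endpoint. -/
open Set Filter Topology

lemma aux_second_deriv_nonpos (φ φ' : ℝ → ℝ) (D : ℝ) (t₀ : ℝ)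
    (hc : ContinuousOn φ (Set.Icc 0 1))
    (hd : ∀ t ∈ Set.Ioo (0 : ℝ) 1, HasDerivAt φ (φ' t) t)
    (hd2 : HasDerivAt φ' D t₀)
    (ht₀ : t₀ ∈ Set.Ioo (0 : ℝ) 1)
    (hmax : IsMaxOn φ (Set.Icc 0 1) t₀) : D ≤ 0 := by
  have hloc : IsLocalMax φ t₀ := hmax.isLocalMax (Icc_mem_nhds ht₀.1 ht₀.2)
  have h0 : φ' t₀ = 0 := hloc.hasDerivAt_eq_zero (hd t₀ ht₀)
  by_contra hD
  push_neg at hD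
  have hslope : Tendsto (slope φ' t₀) (𝓝[>] t₀) (𝓝 D) :=
    ((hasDerivAt_iff_tendsto_slope.mp hd2)).mono_left
      (nhdsWithin_mono _ (by intro x hx; exact ne_of_gt hx))
  have hev : ∀ᶠ t in 𝓝[>] t₀, 0 < slope φ' t₀ t :=
    hslope.eventually (eventually_gt_nhds hD)
  obtain ⟨u, hu, hsub⟩ := mem_nhdsGT_iff_exists_Ioo_subset.mp hev
  have ht₀u : t₀ < u := hu
  set s : ℝ := (t₀ + min u 1) / 2 with hs
  have hmin : t₀ < min u 1 := lt_min ht₀u ht₀.2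
  have hts : t₀ < s := by simp only [hs]; linarith
  have hs1 : s < 1 := by
    have : min u 1 ≤ 1 := min_le_right _ _
    simp only [hs]; nlinarith [ht₀.2]
  have hsu : s < u := by
    have : min u 1 ≤ u := min_le_left _ _
    simp only [hs]; nlinarith
  obtain ⟨c, hc1, hc2⟩ := exists_hasDerivAt_eq_slope φ φ' hts
    (hc.mono (Icc_subset_Icc ht₀.1.le hs1.le))
    (fun x hx => hd x ⟨lt_trans ht₀.1 hx.1, lt_trans hx.2 hs1⟩)
  have hcpos : 0 < slope φ' t₀ c := hsub ⟨hc1.1, lt_trans hc1.2 hsu⟩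
  have hφ'c : 0 < φ' c := by
    rw [slope_def_field, h0, sub_zero] at hcpos
    have : 0 < c - t₀ := sub_pos.mpr hc1.1
    have := mul_pos hcpos this
    rw [div_mul_cancel₀] at this
    · exact this
    · exact ne_of_gt (sub_pos.mpr hc1.1)
  rw [hc2] at hφ'c
  have : φ t₀ < φ s := by
    have hd := sub_pos.mpr hts
    rcases div_pos_iff.mp hφ'c with ⟨h, _⟩ | ⟨_, h⟩ <;> linarith
  exact absurd (hmax ⟨hts.le.trans' ht₀.1.le, hs1.le⟩) (not_le.mpr this)

/-- One-dimensional comparison (maximum principle): if `f'' + Λ̄ f > 0`,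
`g'' + Λ̄ g = 0`, `g > 0`, and `f ≤ g` at the endpoints of `[0,1]`, then
`f ≤ g` on all of `[0,1]`. -/
theorem stmt_3 (Λ : ℝ)
    (f f' f'' g g' g'' : ℝ → ℝ)
    (hf : ContinuousOn f (Set.Icc 0 1))
    (hg : ContinuousOn g (Set.Icc 0 1))
    (hf' : ∀ t ∈ Set.Ioo (0 : ℝ) 1, HasDerivAt f (f' t) t)
    (hf'' : ∀ t ∈ Set.Ioo (0 : ℝ) 1, HasDerivAt f' (f'' t) t)
    (hg' : ∀ t ∈ Set.Ioo (0 : ℝ) 1, HasDerivAt g (g' t) t)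
    (hg'' : ∀ t ∈ Set.Ioo (0 : ℝ) 1, HasDerivAt g' (g'' t) t)
    (hgpos : ∀ t ∈ Set.Icc (0 : ℝ) 1, 0 < g t)
    (hfode : ∀ t ∈ Set.Ioo (0 : ℝ) 1, 0 < f'' t + Λ * f t)
    (hgode : ∀ t ∈ Set.Ioo (0 : ℝ) 1, g'' t + Λ * g t = 0)
    (h0 : f 0 ≤ g 0) (h1 : f 1 ≤ g 1) :
    ∀ t ∈ Set.Icc (0 : ℝ) 1, f t ≤ g t := by
  have hq : ContinuousOn (fun t => f t / g t) (Set.Icc 0 1) :=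
    hf.div hg (fun t ht => ne_of_gt (hgpos t ht))
  obtain ⟨t₀, ht₀mem, ht₀max⟩ :=
    isCompact_Icc.exists_isMaxOn (nonempty_Icc.mpr zero_le_one) hq
  set M : ℝ := f t₀ / g t₀ with hM
  have key : ∀ t ∈ Set.Icc (0:ℝ) 1, f t ≤ M * g t := by
    intro t ht
    have := ht₀max ht
    have hgt := hgpos t ht
    calc f t = (f t / g t) * g t := by field_simp
    _ ≤ M * g t := by exact mul_le_mul_of_nonneg_right this hgt.le
  by_cases hM1 : M ≤ 1
  · intro t ht
    calc f t ≤ M * g t := key t ht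
    _ ≤ 1 * g t := mul_le_mul_of_nonneg_right hM1 (hgpos t ht).le
    _ = g t := one_mul _
  exfalso
  push_neg at hM1
  -- t₀ is interior
  have hq0 : f 0 / g 0 ≤ 1 := by
    rw [div_le_one (hgpos 0 (left_mem_Icc.mpr zero_le_one))]; exact h0
  have hq1 : f 1 / g 1 ≤ 1 := by
    rw [div_le_one (hgpos 1 (right_mem_Icc.mpr zero_le_one))]; exact h1
  have ht₀0 : t₀ ≠ 0 := by rintro rfl; exact absurd hq0 (not_le.mpr hM1)
  have ht₀1 : t₀ ≠ 1 := by rintro rfl; exact absurd hq1 (not_le.mpr hM1)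
  have ht₀ : t₀ ∈ Set.Ioo (0:ℝ) 1 :=
    ⟨lt_of_le_of_ne ht₀mem.1 (Ne.symm ht₀0), lt_of_le_of_ne ht₀mem.2 ht₀1⟩
  -- φ = f - M g has max 0 at t₀
  set φ : ℝ → ℝ := fun t => f t - M * g t with hφ
  have hφc : ContinuousOn φ (Set.Icc 0 1) := hf.sub (continuousOn_const.mul hg)
  have hφd : ∀ t ∈ Set.Ioo (0:ℝ) 1, HasDerivAt φ (f' t - M * g' t) t :=
    fun t ht => (hf' t ht).sub ((hg' t ht).const_mul M)
  have hφd2 : HasDerivAt (fun t => f' t - M * g' t) (f'' t₀ - M * g'' t₀) t₀ :=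
    (hf'' t₀ ht₀).sub ((hg'' t₀ ht₀).const_mul M)
  have hφmax : IsMaxOn φ (Set.Icc 0 1) t₀ := by
    intro t ht
    have h1 : φ t ≤ 0 := sub_nonpos.mpr (key t ht)
    have h2 : φ t₀ = 0 := by
      simp only [hφ, hM]
      rw [div_mul_cancel₀ _ (ne_of_gt (hgpos t₀ ht₀mem)), sub_self]
    simpa [h2] using h1
  have := aux_second_deriv_nonpos φ (fun t => f' t - M * g' t) _ t₀ hφc hφd hφd2 ht₀ hφmax
  -- f'' t₀ - M g'' t₀ ≤ 0, g'' t₀ = -Λ g t₀, M g t₀ = f t₀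
  have hge : g'' t₀ = -(Λ * g t₀) := by linarith [hgode t₀ ht₀]
  have hfe : M * g t₀ = f t₀ := by
    rw [hM]; exact div_mul_cancel₀ _ (ne_of_gt (hgpos t₀ ht₀mem))
  have h2 : f'' t₀ + Λ * f t₀ ≤ 0 := by
    calc f'' t₀ + Λ * f t₀ = f'' t₀ - M * g'' t₀ := by rw [← hfe, hge]; ring
    _ ≤ 0 := this
  exact absurd (hfode t₀ ht₀) (not_lt.mpr h2)
end

section
/- Fix K ∈ ℝ, N > 1 and t ∈ [0,1]. Then, as λ → 0⁺, the distortion coefficient τ_{K,N}^{(t)}(λ) admits the Taylor expansion τ_{K,N}^{(t)}(λ) = t(1 + (1−t²)(K/(6N))λ²) + o(λ²); that is, (τ_{K,N}^{(t)}(λ) − t − t(1−t²)(K/(6N))λ²)/λ² → 0 as λ → 0⁺. -/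
/-- Distortion coefficient `τ_{K,N}^{(t)}(θ) = t^{1/N} (σ_{K/(N-1)}^{(t)}(θ))^{1-1/N}`. -/
noncomputable def tauCoeff (K N t θ : ℝ) : ℝ :=
  t ^ (1 / N) * (sigmaCoeff (K / (N - 1)) t θ) ^ (1 - 1 / N)

/-! For `θ ≠ 0` and `s = √|Λ|`, `σ_Λ^{(t)}(θ) = f(t s θ) / f(s θ)` with `f = sin` or `f = sinh`.
Since `f x = x + a x³ + o(x³)`, one gets `f(t x) / f x = t + a (t³ - t) x² + o(x²)`, hence
`σ_Λ^{(t)}(θ) = t + t (1 - t²) Λ θ² / 6 + o(θ²)`. For `t > 0`, `τ = g ∘ σ` with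
`g x = t^{1/N} x^{1-1/N}`, which is differentiable at `t` with `g t = t` and `g' t = 1 - 1/N`,
and `(1 - 1/N) K / (N - 1) = K / N`. For `t = 0`, `τ` vanishes identically. -/

open Real Filter Set Asymptotics Topology

theorem Real.sinh_sub_taylor_isLittleO :
    (fun x => sinh x - (x + x ^ 3 / 6)) =o[𝓝 0] (· ^ 3) := by
  have hexp := Real.exp_sub_sum_range_succ_isLittleO_pow 3
  have hexp_neg : (fun x : ℝ => exp (-x) - ∑ i ∈ Finset.range 4, (-x) ^ i / i.factorial)
      =o[𝓝 0] (· ^ 3) := by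
    have := hexp.comp_tendsto (continuous_neg.tendsto' (0 : ℝ) 0 neg_zero)
    refine this.trans_isBigO <| (isBigO_refl _ _).neg_left.congr_left fun x => ?_
    simp only [Function.comp_apply]
    ring
  refine ((hexp.sub hexp_neg).const_mul_left (1 / 2)).congr_left fun x => ?_
  simp only [Finset.sum_range_succ, Finset.sum_range_zero, Nat.factorial, sinh_eq]
  push_cast
  ring

theorem Real.sin_sub_taylor_isLittleO :
    (fun x => sin x - (x - x ^ 3 / 6)) =o[𝓝 0] (· ^ 3) := by
  refine IsBigO.trans_isLittleO ?_ (isLittleO_pow_pow (by norm_num : 3 < 5))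
  refine .of_bound (1 / 100) ?_
  filter_upwards [Metric.closedBall_mem_nhds (0 : ℝ) zero_lt_one] with x hx
  have hx : |x| ≤ 1 := by simpa using hx
  simpa [div_eq_inv_mul, mul_comm] using Real.sin_bound hx

theorem tendsto_id_div_of_sub_cubic_isLittleO {f : ℝ → ℝ} {a : ℝ}
    (hf : (fun x => f x - (x + a * x ^ 3)) =o[𝓝 0] (· ^ 3)) :
    Tendsto (fun x => x / f x) (𝓝[≠] 0) (𝓝 1) := by
  have h_lin : (fun x => f x - x) =o[𝓝 0] fun x => x := by
    have h31 := isLittleO_pow_pow (𝕜 := ℝ) (by norm_num : 1 < 3)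
    exact ((hf.trans h31).add (h31.const_mul_left a)).congr (fun x => by ring) pow_one
  have := ((h_lin.tendsto_div_nhds_zero.mono_left
    (nhdsWithin_le_nhds (s := {0}ᶜ))).add_const 1).inv₀ (by norm_num)
  rw [zero_add, inv_one] at this
  refine this.congr' ?_
  filter_upwards [self_mem_nhdsWithin] with x (hx : x ≠ 0)
  field_simp
  ring

theorem tendsto_comp_mul_div_sub_div_sq {f : ℝ → ℝ} {a : ℝ}
    (hf : (fun x => f x - (x + a * x ^ 3)) =o[𝓝 0] (· ^ 3)) (t : ℝ) :
    Tendsto (fun x => (f (t * x) / f x - t) / x ^ 2) (𝓝[≠] 0) (𝓝 (a * (t ^ 3 - t))) := by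
  have h_scaled : (fun x => f (t * x) - (t * x + a * (t * x) ^ 3)) =o[𝓝 0] (· ^ 3) := by
    have := hf.comp_tendsto ((continuous_const_mul t).tendsto' 0 0 (mul_zero t))
    refine this.trans_isBigO <| ((isBigO_refl (· ^ 3) _).const_mul_left (t ^ 3)).congr_left ?_
    intro x
    simp only [Function.comp_apply]
    ring
  have h_num : Tendsto (fun x => (f (t * x) - t * f x) / x ^ 3) (𝓝[≠] 0)
      (𝓝 (a * (t ^ 3 - t))) := by
    have := ((h_scaled.sub (hf.const_mul_left t)).tendsto_div_nhds_zero.mono_left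
      (nhdsWithin_le_nhds (s := {0}ᶜ))).add_const (a * (t ^ 3 - t))
    rw [zero_add] at this
    refine this.congr' ?_
    filter_upwards [self_mem_nhdsWithin] with x (hx : x ≠ 0)
    field_simp
    ring
  have h_den := tendsto_id_div_of_sub_cubic_isLittleO hf
  -- `x / f x → 1` forces `f x ≠ 0`, because `x / 0 = 0`.
  have h_ne : ∀ᶠ x in 𝓝[≠] 0, x ≠ 0 ∧ f x ≠ 0 := by
    filter_upwards [self_mem_nhdsWithin, h_den.eventually_ne one_ne_zero] with x hx hfx
    exact ⟨hx, fun h => hfx (by simp [h])⟩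
  -- `(f (t x) / f x - t) / x² = (f (t x) - t f x) / x³ * (x / f x)`
  have := h_num.mul h_den
  rw [mul_one] at this
  refine this.congr' ?_
  filter_upwards [h_ne] with x ⟨hx, hfx⟩
  field_simp

theorem tendsto_comp_mul_const_div_sq {u : ℝ → ℝ} {L s : ℝ} (hs : s ≠ 0)
    (hu : Tendsto (fun x => u x / x ^ 2) (𝓝[≠] 0) (𝓝 L)) :
    Tendsto (fun x => u (x * s) / x ^ 2) (𝓝[≠] 0) (𝓝 (L * s ^ 2)) := by
  have h_mul : Tendsto (fun x => x * s) (𝓝[≠] 0) (𝓝[≠] 0) := by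
    refine tendsto_nhdsWithin_of_tendsto_nhds_of_eventually_within _ ?_ ?_
    · exact ((continuous_mul_const s).tendsto' 0 0 (zero_mul s)).mono_left nhdsWithin_le_nhds
    · filter_upwards [self_mem_nhdsWithin] with x (hx : x ≠ 0)
      exact mul_ne_zero hx hs
  refine ((hu.comp h_mul).mul_const (s ^ 2)).congr' ?_
  filter_upwards [self_mem_nhdsWithin] with x (hx : x ≠ 0)
  simp only [Function.comp_apply]
  field_simp

theorem sigmaCoeff_of_pos {Λ : ℝ} (t : ℝ) {θ : ℝ} (hΛ : 0 < Λ) (hθ : θ ≠ 0) :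
    sigmaCoeff Λ t θ = sin (t * (θ * √Λ)) / sin (θ * √Λ) := by
  have : 0 < Λ * θ ^ 2 := by positivity
  rw [sigmaCoeff, if_neg this.ne', if_pos this]

theorem sigmaCoeff_of_neg {Λ : ℝ} (t : ℝ) {θ : ℝ} (hΛ : Λ < 0) (hθ : θ ≠ 0) :
    sigmaCoeff Λ t θ = sinh (t * (θ * √(-Λ))) / sinh (θ * √(-Λ)) := by
  have : Λ * θ ^ 2 < 0 := mul_neg_of_neg_of_pos hΛ (by positivity)
  rw [sigmaCoeff, if_neg this.ne, if_neg this.not_gt]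

theorem tendsto_sigmaCoeff_sub_div_sq (Λ t : ℝ) :
    Tendsto (fun θ => (sigmaCoeff Λ t θ - t) / θ ^ 2) (𝓝[≠] 0)
      (𝓝 (t * (1 - t ^ 2) * Λ / 6)) := by
  rcases lt_trichotomy Λ 0 with hΛ | rfl | hΛ
  · have hsinh := tendsto_comp_mul_const_div_sq (Real.sqrt_pos.2 (neg_pos.2 hΛ)).ne'
      (tendsto_comp_mul_div_sub_div_sq (a := 1 / 6)
        (Real.sinh_sub_taylor_isLittleO.congr_left fun x => by ring) t)
    rw [sq_sqrt (neg_nonneg.2 hΛ.le), show 1 / 6 * (t ^ 3 - t) * -Λ = t * (1 - t ^ 2) * Λ / 6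
      by ring] at hsinh
    refine hsinh.congr' ?_
    filter_upwards [self_mem_nhdsWithin] with θ (hθ : θ ≠ 0)
    rw [sigmaCoeff_of_neg t hΛ hθ]
  · simp [sigmaCoeff]
  · have hsin := tendsto_comp_mul_const_div_sq (Real.sqrt_pos.2 hΛ).ne'
      (tendsto_comp_mul_div_sub_div_sq (a := -1 / 6)
        (Real.sin_sub_taylor_isLittleO.congr_left fun x => by ring) t)
    rw [sq_sqrt hΛ.le, show -1 / 6 * (t ^ 3 - t) * Λ = t * (1 - t ^ 2) * Λ / 6
      by ring] at hsin
    refine hsin.congr' ?_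
    filter_upwards [self_mem_nhdsWithin] with θ (hθ : θ ≠ 0)
    rw [sigmaCoeff_of_pos t hΛ hθ]

theorem HasDerivAt.tendsto_comp_sub_div {α : Type*} {F : Filter α} {g : ℝ → ℝ} {g' t m : ℝ}
    {u v : α → ℝ} (hg : HasDerivAt g g' t) (hv : Tendsto v F (𝓝 0))
    (hv0 : ∀ᶠ x in F, v x ≠ 0) (hu : Tendsto (fun x => (u x - t) / v x) F (𝓝 m)) :
    Tendsto (fun x => (g (u x) - g t) / v x) F (𝓝 (g' * m)) := by
  have h_bigO : (fun x => u x - t) =O[F] v := by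
    refine ((hu.isBigO_one ℝ).mul (isBigO_refl v F)).congr' ?_ (by simp)
    filter_upwards [hv0] with x hx
    exact div_mul_cancel₀ _ hx
  have hut : Tendsto u F (𝓝 t) := tendsto_sub_nhds_zero_iff.1 (h_bigO.trans_tendsto hv)
  have h_rem := (hg.isLittleO.comp_tendsto hut).trans_isBigO h_bigO
  have := h_rem.tendsto_div_nhds_zero.add (hu.const_mul g')
  rw [zero_add] at this
  refine this.congr' ?_
  filter_upwards [hv0] with x hx
  simp only [Function.comp_apply, smul_eq_mul]
  field_simp
  ring

theorem hasDerivAt_const_rpow_mul_rpow {a b t : ℝ} (ht : 0 < t) (hab : a + b = 1) :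
    HasDerivAt (fun x => t ^ a * x ^ b) b t := by
  have := (hasDerivAt_rpow_const (p := b) (Or.inl ht.ne')).const_mul (t ^ a)
  rwa [mul_left_comm, ← rpow_add ht, show a + (b - 1) = 0 by linarith, rpow_zero, mul_one] at this

/-- Taylor expansion of `τ_{K,N}^{(t)}(λ)` at `λ = 0⁺`:
`τ_{K,N}^{(t)}(λ) = t(1 + (1-t²)(K/(6N))λ²) + o(λ²)`. -/
theorem stmt_5 (K N t : ℝ) (hN : 1 < N) (ht : t ∈ Set.Icc (0 : ℝ) 1) :
    Filter.Tendsto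
      (fun l : ℝ =>
        (tauCoeff K N t l - t - t * (1 - t ^ 2) * (K / (6 * N)) * l ^ 2) / l ^ 2)
      (nhdsWithin 0 (Set.Ioi 0)) (nhds 0) := by
  have hN0 : N ≠ 0 := by positivity
  have hN1 : N - 1 ≠ 0 := (sub_pos.2 hN).ne'
  rcases ht.1.eq_or_lt with rfl | ht0
  · simp [tauCoeff, sigmaCoeff, hN0]
  have hsq : Tendsto (fun l : ℝ => l ^ 2) (𝓝[>] 0) (𝓝 0) :=
    ((continuous_pow 2).tendsto' 0 0 (zero_pow two_ne_zero)).mono_left nhdsWithin_le_nhds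
  have hτ := (hasDerivAt_const_rpow_mul_rpow ht0 (add_sub_cancel (1 / N) 1)).tendsto_comp_sub_div
    hsq (eventually_nhdsWithin_of_forall fun l (hl : 0 < l) => by positivity)
    ((tendsto_sigmaCoeff_sub_div_sq (K / (N - 1)) t).mono_left (nhdsGT_le_nhdsNE 0))
  rw [← rpow_add ht0, add_sub_cancel, rpow_one,
    show (1 - 1 / N) * (t * (1 - t ^ 2) * (K / (N - 1)) / 6) = t * (1 - t ^ 2) * (K / (6 * N)) by
      field_simp] at hτ
  have := hτ.sub_const (t * (1 - t ^ 2) * (K / (6 * N)))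
  rw [sub_self] at this
  refine this.congr' ?_
  filter_upwards [self_mem_nhdsWithin] with l (hl : 0 < l)
  rw [tauCoeff]
  field_simp
end

section
/- Let K ∈ ℝ, N > 1 and δ > 0. There exist λ₁ > 0 and c > 0 such that for every λ ∈ (0, λ₁] the following holds: if f : [0,1] → ℝ is continuous on [0,1], twice continuously differentiable on (0,1), nonnegative, satisfies f(0) + f(1) ≥ 1, and satisfies the differential inequality f''(s) + ((K−δ)λ²/N) f(s) ≥ 0 for every s ∈ (0,1), then f(1/2) ≤ τ_{K,N}^{(1/2)}(λ) (f(0) + f(1)) − c λ². -/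
/-!
Let `a = (K - δ)λ²/N` and `F(s) = f(s) + f(1 - s)`. The comparison function
`φ(s) = 1 - (a/2)(s - 1/2)²` satisfies `φ'' + aφ ≤ 0`, so the Wronskian `φF' - Fφ'` is
nondecreasing; it vanishes at `1/2` by symmetry, hence `F/φ` increases on `[1/2, 1]` and
`2 f(1/2) ≤ (f(0) + f(1))/(1 - a/8) = (f(0) + f(1))(1 + a/8 + O(λ⁴))`.
On the other side `2σ_Λ^{(1/2)}(λ)` is `sec` or `sech` of `λ√|Λ|/2`, hence at least
`1 + Λλ²/8`, and a second-order Bernoulli inequality for `x ↦ x^{1-1/N}` turns this into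
`τ_{K,N}^{(1/2)}(λ) ≥ 1/2 + Kλ²/(16N) - O(λ⁴)`. The first-order terms differ by `δλ²/(16N)`.
-/

open Real Set

theorem monotoneOn_wronskian {F F' F'' φ φ' φ'' : ℝ → ℝ} {a b : ℝ}
    (hF : ∀ x ∈ Ioo a b, HasDerivAt F (F' x) x) (hF' : ∀ x ∈ Ioo a b, HasDerivAt F' (F'' x) x)
    (hφ : ∀ x ∈ Ioo a b, HasDerivAt φ (φ' x) x) (hφ' : ∀ x ∈ Ioo a b, HasDerivAt φ' (φ'' x) x)
    (h : ∀ x ∈ Ioo a b, 0 ≤ φ x * F'' x - F x * φ'' x) :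
    MonotoneOn (fun x ↦ φ x * F' x - F x * φ' x) (Ioo a b) := by
  have hw : ∀ x ∈ Ioo a b,
      HasDerivAt (fun x ↦ φ x * F' x - F x * φ' x) (φ x * F'' x - F x * φ'' x) x := fun x hx ↦
    (((hφ x hx).mul (hF' x hx)).sub ((hF x hx).mul (hφ' x hx))).congr_deriv (by ring)
  refine monotoneOn_of_hasDerivWithinAt_nonneg (f' := fun x ↦ φ x * F'' x - F x * φ'' x)
    (convex_Ioo a b) (fun x hx ↦ (hw x hx).continuousAt.continuousWithinAt) ?_ ?_ <;>
    rw [interior_Ioo]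
  · exact fun x hx ↦ (hw x hx).hasDerivWithinAt
  · exact h

theorem monotoneOn_div_of_wronskian_nonneg {F F' φ φ' : ℝ → ℝ} {a b : ℝ}
    (hF : ContinuousOn F (Icc a b)) (hφ : ContinuousOn φ (Icc a b))
    (hφ₀ : ∀ x ∈ Icc a b, φ x ≠ 0)
    (hF' : ∀ x ∈ Ioo a b, HasDerivAt F (F' x) x) (hφ' : ∀ x ∈ Ioo a b, HasDerivAt φ (φ' x) x)
    (hw : ∀ x ∈ Ioo a b, 0 ≤ φ x * F' x - F x * φ' x) :
    MonotoneOn (fun x ↦ F x / φ x) (Icc a b) := by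
  refine monotoneOn_of_hasDerivWithinAt_nonneg
    (f' := fun x ↦ (F' x * φ x - F x * φ' x) / φ x ^ 2) (convex_Icc a b) (hF.div hφ hφ₀) ?_ ?_ <;>
    rw [interior_Icc]
  · exact fun x hx ↦ ((hF' x hx).div (hφ' x hx) (hφ₀ x (Ioo_subset_Icc_self hx))).hasDerivWithinAt
  · intro x hx
    rw [mul_comm (F' x)]
    exact div_nonneg (hw x hx) (sq_nonneg _)

theorem div_le_div_of_wronskian_eq_zero {F F' F'' φ φ' φ'' : ℝ → ℝ} {a b c : ℝ}
    (hc : c ∈ Ioo a b) (hFc : ContinuousOn F (Icc c b)) (hφc : ContinuousOn φ (Icc c b))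
    (hφ₀ : ∀ x ∈ Icc c b, φ x ≠ 0)
    (hF : ∀ x ∈ Ioo a b, HasDerivAt F (F' x) x) (hF' : ∀ x ∈ Ioo a b, HasDerivAt F' (F'' x) x)
    (hφ : ∀ x ∈ Ioo a b, HasDerivAt φ (φ' x) x) (hφ' : ∀ x ∈ Ioo a b, HasDerivAt φ' (φ'' x) x)
    (h : ∀ x ∈ Ioo a b, 0 ≤ φ x * F'' x - F x * φ'' x)
    (hwc : φ c * F' c - F c * φ' c = 0) :
    F c / φ c ≤ F b / φ b := by
  have hsub : Ioo c b ⊆ Ioo a b := Ioo_subset_Ioo_left hc.1.le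
  have hw : ∀ x ∈ Ioo c b, 0 ≤ φ x * F' x - F x * φ' x := fun x hx ↦
    hwc ▸ monotoneOn_wronskian hF hF' hφ hφ' h hc (hsub hx) hx.1.le
  exact monotoneOn_div_of_wronskian_nonneg hFc hφc hφ₀ (fun x hx ↦ hF x (hsub hx))
    (fun x hx ↦ hφ x (hsub hx)) hw (left_mem_Icc.2 hc.2.le) (right_mem_Icc.2 hc.2.le) hc.2.le

theorem two_mul_apply_half_le_of_deriv_add_mul_nonneg {a : ℝ} (ha : a < 8) {f f' f'' : ℝ → ℝ}
    (hf : ContinuousOn f (Icc 0 1)) (hf' : ∀ s ∈ Ioo (0 : ℝ) 1, HasDerivAt f (f' s) s)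
    (hf'' : ∀ s ∈ Ioo (0 : ℝ) 1, HasDerivAt f' (f'' s) s) (hf₀ : ∀ s ∈ Icc (0 : ℝ) 1, 0 ≤ f s)
    (hode : ∀ s ∈ Ioo (0 : ℝ) 1, 0 ≤ f'' s + a * f s) :
    2 * f (1 / 2) ≤ (f 0 + f 1) / (1 - a / 8) := by
  have hIcc : MapsTo (fun s : ℝ ↦ 1 - s) (Icc 0 1) (Icc 0 1) := fun s hs ↦
    ⟨by linarith [hs.2], by linarith [hs.1]⟩
  have hIoo : MapsTo (fun s : ℝ ↦ 1 - s) (Ioo 0 1) (Ioo 0 1) := fun s hs ↦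
    ⟨by linarith [hs.2], by linarith [hs.1]⟩
  have hrefl : ∀ s, HasDerivAt (fun x : ℝ ↦ 1 - x) (-1) s := fun s ↦
    by simpa using (hasDerivAt_id s).const_sub 1
  have hF : ContinuousOn (fun s ↦ f s + f (1 - s)) (Icc 0 1) :=
    hf.add (hf.comp (by fun_prop) hIcc)
  have hF' : ∀ s ∈ Ioo (0 : ℝ) 1, HasDerivAt (fun s ↦ f s + f (1 - s)) (f' s - f' (1 - s)) s :=
    fun s hs ↦ ((hf' s hs).add ((hf' _ (hIoo hs)).comp s (hrefl s))).congr_deriv (by ring)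
  have hF'' : ∀ s ∈ Ioo (0 : ℝ) 1,
      HasDerivAt (fun s ↦ f' s - f' (1 - s)) (f'' s + f'' (1 - s)) s :=
    fun s hs ↦ ((hf'' s hs).sub ((hf'' _ (hIoo hs)).comp s (hrefl s))).congr_deriv (by ring)
  -- `φ s = 1 - a/2 (s - 1/2)²` has `φ'' + a φ = -(a²/2)(s - 1/2)² ≤ 0`
  have hφ₀ : ∀ s ∈ Icc (0 : ℝ) 1, 0 < 1 - a / 2 * (s - 1 / 2) ^ 2 := fun s hs ↦ by
    have : (s - 1 / 2) ^ 2 ≤ 1 / 4 := by nlinarith [hs.1, hs.2]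
    rcases le_total a 0 with h | h <;> nlinarith [sq_nonneg (s - 1 / 2)]
  have hφ' : ∀ s, HasDerivAt (fun s ↦ 1 - a / 2 * (s - 1 / 2) ^ 2) (-(a * (s - 1 / 2))) s :=
    fun s ↦ ((((hasDerivAt_id s).sub_const (1 / 2)).pow 2).const_mul (a / 2)).const_sub 1
      |>.congr_deriv (by simp; ring)
  have hφ'' : ∀ s, HasDerivAt (fun s ↦ -(a * (s - 1 / 2))) (-a) s :=
    fun s ↦ (((hasDerivAt_id s).sub_const (1 / 2)).const_mul a).neg.congr_deriv (by simp)
  have key := div_le_div_of_wronskian_eq_zero (c := 1 / 2) (φ'' := fun _ ↦ -a) (by norm_num)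
    (hF.mono (Icc_subset_Icc_left (by norm_num))) (by fun_prop)
    (fun s hs ↦ (hφ₀ s ⟨by linarith [hs.1], hs.2⟩).ne') hF' hF'' (fun s _ ↦ hφ' s)
    (fun s _ ↦ hφ'' s) (fun s hs ↦ by
      have hF₀ := add_nonneg (hf₀ s (Ioo_subset_Icc_self hs))
        (hf₀ (1 - s) (Ioo_subset_Icc_self (hIoo hs)))
      have hφF := mul_nonneg (hφ₀ s (Ioo_subset_Icc_self hs)).le
        (add_nonneg (hode s hs) (hode (1 - s) (hIoo hs)))
      have hrem := mul_nonneg (mul_nonneg (sq_nonneg a) (sq_nonneg (s - 1 / 2))) hF₀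
      linear_combination hφF + hrem / 2) (by norm_num)
  norm_num at key
  rw [two_mul, add_comm (f 0)]
  convert key using 3
  ring

namespace Real

theorem one_add_sq_div_two_le_inv_cos {z : ℝ} (hz : |z| ≤ 1) : 1 + z ^ 2 / 2 ≤ (cos z)⁻¹ := by
  have hz2 : z ^ 2 ≤ 1 := by nlinarith [sq_abs z, abs_nonneg z]
  have hcos : 0 < cos z := by nlinarith [one_sub_sq_div_two_le_cos (x := z)]
  have hbound := (abs_le.1 (cos_bound hz)).2
  rw [pow_abs, show z ^ 4 = (z ^ 2) ^ 2 by ring, abs_of_nonneg (sq_nonneg _)] at hbound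
  rw [le_inv_comm₀ (by positivity) hcos, inv_eq_one_div, le_div_iff₀ (by positivity)]
  nlinarith [sq_nonneg z, mul_nonneg (sq_nonneg z) (sq_nonneg z)]

theorem inv_cos_le_one_add_sq {z : ℝ} (hz : |z| ≤ 1) : (cos z)⁻¹ ≤ 1 + z ^ 2 := by
  have hz2 : z ^ 2 ≤ 1 := by nlinarith [sq_abs z, abs_nonneg z]
  have hcos := one_sub_sq_div_two_le_cos (x := z)
  rw [inv_le_comm₀ (by nlinarith) (by positivity), inv_eq_one_div, div_le_iff₀ (by positivity)]
  nlinarith [sq_nonneg z]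

theorem one_sub_sq_div_two_le_inv_cosh (z : ℝ) : 1 - z ^ 2 / 2 ≤ (cosh z)⁻¹ := by
  rw [inv_eq_one_div, le_div_iff₀ (cosh_pos z)]
  rcases le_total (1 - z ^ 2 / 2) 0 with hneg | hpos
  · nlinarith [cosh_pos z]
  -- `cosh z ≤ exp (z² / 2)` and `1 - z² / 2 ≤ exp (-z² / 2)`
  calc (1 - z ^ 2 / 2) * cosh z ≤ exp (-(z ^ 2 / 2)) * exp (z ^ 2 / 2) := by
        gcongr
        · linarith [add_one_le_exp (-(z ^ 2 / 2))]
        · exact cosh_le_exp_half_sq z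
    _ = 1 := by rw [← exp_add, neg_add_cancel, exp_zero]

end Real

theorem two_mul_sigmaCoeff_half_of_pos {Λ θ : ℝ} (hΛ : 0 < Λ) (h : Λ * θ ^ 2 < π ^ 2) :
    2 * sigmaCoeff Λ (1 / 2) θ = (cos (θ * √Λ / 2))⁻¹ := by
  rcases eq_or_ne θ 0 with rfl | hθ
  · simp [sigmaCoeff]
  have hy : (θ * √Λ) ^ 2 = Λ * θ ^ 2 := by rw [mul_pow, sq_sqrt hΛ.le]; ring
  have hsin : sin (θ * √Λ / 2) ≠ 0 := by
    have hlt : |θ * √Λ| < π := abs_lt_of_sq_lt_sq (hy ▸ h) pi_pos.le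
    rw [abs_lt] at hlt
    rw [Ne, sin_eq_zero_iff_of_lt_of_lt (by linarith) (by linarith)]
    positivity
  rw [sigmaCoeff, if_neg (by positivity), if_pos (by positivity),
    show θ * √Λ = 2 * (θ * √Λ / 2) by ring, sin_two_mul]
  field_simp

theorem two_mul_sigmaCoeff_half_of_neg {Λ θ : ℝ} (hΛ : Λ < 0) :
    2 * sigmaCoeff Λ (1 / 2) θ = (cosh (θ * √(-Λ) / 2))⁻¹ := by
  rcases eq_or_ne θ 0 with rfl | hθ
  · simp [sigmaCoeff]
  have hsinh : sinh (θ * √(-Λ) / 2) ≠ 0 := by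
    rw [Ne, sinh_eq_zero]; have : 0 < -Λ := by linarith
    positivity
  have hneg : Λ * θ ^ 2 < 0 := mul_neg_of_neg_of_pos hΛ (by positivity)
  rw [sigmaCoeff, if_neg hneg.ne, if_neg hneg.not_gt,
    show θ * √(-Λ) = 2 * (θ * √(-Λ) / 2) by ring, sinh_two_mul]
  field_simp

theorem two_mul_sigmaCoeff_half_mem_Icc {Λ θ : ℝ} (h : |Λ| * θ ^ 2 ≤ 4) :
    2 * sigmaCoeff Λ (1 / 2) θ ∈ Icc (1 + Λ * θ ^ 2 / 8) (1 + |Λ| * θ ^ 2 / 4) := by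
  rcases lt_trichotomy Λ 0 with hΛ | rfl | hΛ
  · have hz : (θ * √(-Λ) / 2) ^ 2 = -Λ * θ ^ 2 / 4 := by
      rw [div_pow, mul_pow, sq_sqrt (by linarith)]; ring
    rw [two_mul_sigmaCoeff_half_of_neg hΛ]
    refine ⟨?_, (inv_le_one_of_one_le₀ (one_le_cosh _)).trans ?_⟩
    · linarith [one_sub_sq_div_two_le_inv_cosh (θ * √(-Λ) / 2)]
    · linarith [mul_nonneg (abs_nonneg Λ) (sq_nonneg θ)]
  · simp [sigmaCoeff]
  · have hz : (θ * √Λ / 2) ^ 2 = Λ * θ ^ 2 / 4 := by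
      rw [div_pow, mul_pow, sq_sqrt hΛ.le]; ring
    rw [abs_of_pos hΛ] at h ⊢
    have hz1 : |θ * √Λ / 2| ≤ 1 := (sq_le_one_iff_abs_le_one _).1 (by linarith)
    rw [two_mul_sigmaCoeff_half_of_pos hΛ (by nlinarith [pi_gt_three])]
    constructor
    · linarith [one_add_sq_div_two_le_inv_cos hz1]
    · linarith [inv_cos_le_one_add_sq hz1]

theorem one_add_mul_sub_sq_le_rpow_one_add {t p : ℝ} (ht : -1 < t) (hp₀ : 0 ≤ p)
    (hp₁ : p ≤ 1) : 1 + p * t - t ^ 2 ≤ (1 + t) ^ p := by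
  have h1t : 0 < 1 + t := by linarith
  have hden : 0 < 1 + (1 - p) * t := by nlinarith [mul_nonneg (sub_nonneg.2 hp₁) h1t.le]
  -- `(1 + t) ^ p = (1 + t) / (1 + t) ^ (1 - p)`, and Bernoulli bounds the denominator
  have hbern : (1 + t) ^ (1 - p) ≤ 1 + (1 - p) * t :=
    rpow_one_add_le_one_add_mul_self (by linarith) (by linarith) (by linarith)
  have hsplit : (1 + t) ^ p = (1 + t) / (1 + t) ^ (1 - p) := by
    rw [eq_div_iff (rpow_pos_of_pos h1t _).ne', ← rpow_add h1t, add_sub_cancel, rpow_one]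
  calc 1 + p * t - t ^ 2 ≤ (1 + t) / (1 + (1 - p) * t) := by
        rw [le_div_iff₀ hden]
        nlinarith [mul_nonneg (sq_nonneg t)
          (add_nonneg (sq_nonneg p) (mul_nonneg (sub_nonneg.2 hp₁) h1t.le))]
    _ ≤ (1 + t) ^ p := by
        rw [hsplit]
        exact div_le_div_of_nonneg_left h1t.le (rpow_pos_of_pos h1t _) hbern

theorem half_add_sub_le_tauCoeff_half {K N θ : ℝ} (hN : 1 < N)
    (h : |K / (N - 1)| * θ ^ 2 ≤ 2) :
    1 / 2 + K * θ ^ 2 / (16 * N) - (K / (N - 1)) ^ 2 * θ ^ 4 / 32 ≤ tauCoeff K N (1 / 2) θ := by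
  set Λ := K / (N - 1)
  obtain ⟨hlo, hhi⟩ := two_mul_sigmaCoeff_half_mem_Icc (h.trans (by norm_num))
  set x := 2 * sigmaCoeff Λ (1 / 2) θ with hx
  have hΛθ : 0 ≤ |Λ| * θ ^ 2 := by positivity
  have hΛθ' : -|Λ| * θ ^ 2 ≤ Λ * θ ^ 2 := by nlinarith [neg_abs_le Λ, sq_nonneg θ]
  have hN₀ : 0 < N := by linarith
  have hp₀ : 0 ≤ 1 - 1 / N := by rw [sub_nonneg, div_le_one hN₀]; exact hN.le
  have hp₁ : 1 - 1 / N ≤ 1 := sub_le_self 1 (by positivity)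
  have hpΛ : (1 - 1 / N) * Λ = K / N := by
    have : N - 1 ≠ 0 := by linarith
    simp only [Λ]; field_simp
  have hτ : tauCoeff K N (1 / 2) θ = x ^ (1 - 1 / N) / 2 := by
    rw [tauCoeff, show sigmaCoeff Λ (1 / 2) θ = 1 / 2 * x by rw [hx]; ring,
      mul_rpow (by norm_num) (by linarith), ← mul_assoc, ← rpow_add (by norm_num)]
    norm_num
    ring
  have hbern := one_add_mul_sub_sq_le_rpow_one_add (t := x - 1) (by linarith) hp₀ hp₁
  have hlin : (1 - 1 / N) * (Λ * θ ^ 2 / 8) ≤ (1 - 1 / N) * (x - 1) :=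
    mul_le_mul_of_nonneg_left (by linarith) hp₀
  have hsq : (x - 1) ^ 2 ≤ (|Λ| * θ ^ 2 / 4) ^ 2 :=
    sq_le_sq' (by linarith) (by linarith)
  have hsq' : (|Λ| * θ ^ 2 / 4) ^ 2 = Λ ^ 2 * θ ^ 4 / 16 := by
    rw [div_pow, mul_pow, sq_abs]; ring
  have hlin' : (1 - 1 / N) * (Λ * θ ^ 2 / 8) = 2 * (K * θ ^ 2 / (16 * N)) := by
    rw [show (1 - 1 / N) * (Λ * θ ^ 2 / 8) = (1 - 1 / N) * Λ * θ ^ 2 / 8 by ring, hpΛ]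
    field_simp
    ring
  rw [add_sub_cancel] at hbern
  rw [hτ]
  linarith

theorem apply_half_le_tauCoeff_half_mul_sub {K N δ θ : ℝ} (hN : 1 < N)
    (hθ₁ : |K / (N - 1)| * θ ^ 2 ≤ 2) (hθ₂ : (K - δ) * θ ^ 2 / N ≤ 4)
    (hθ₃ : ((K / (N - 1)) ^ 2 / 32 + ((K - δ) / N) ^ 2 / 64) * θ ^ 2 ≤ δ / (32 * N))
    {f f' f'' : ℝ → ℝ} (hf : ContinuousOn f (Icc 0 1))
    (hf' : ∀ s ∈ Ioo (0 : ℝ) 1, HasDerivAt f (f' s) s)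
    (hf'' : ∀ s ∈ Ioo (0 : ℝ) 1, HasDerivAt f' (f'' s) s) (hf₀ : ∀ s ∈ Icc (0 : ℝ) 1, 0 ≤ f s)
    (hsum : 1 ≤ f 0 + f 1) (hode : ∀ s ∈ Ioo (0 : ℝ) 1, 0 ≤ f'' s + (K - δ) * θ ^ 2 / N * f s) :
    f (1 / 2) ≤ tauCoeff K N (1 / 2) θ * (f 0 + f 1) - δ / (32 * N) * θ ^ 2 := by
  set a := (K - δ) * θ ^ 2 / N
  set S := f 0 + f 1
  have hS : 0 ≤ S := by linarith
  have hinv : (1 - a / 8)⁻¹ ≤ 1 + a / 8 + a ^ 2 / 32 := by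
    rw [inv_le_comm₀ (by linarith) (by nlinarith [sq_nonneg a]), inv_eq_one_div,
      div_le_iff₀ (by nlinarith [sq_nonneg a])]
    nlinarith [mul_nonneg (sq_nonneg a) (by linarith : 0 ≤ 4 - a)]
  have hmid : 2 * f (1 / 2) ≤ S * (1 + a / 8 + a ^ 2 / 32) := by
    calc 2 * f (1 / 2) ≤ S / (1 - a / 8) :=
          two_mul_apply_half_le_of_deriv_add_mul_nonneg (by linarith) hf hf' hf'' hf₀ hode
      _ ≤ S * (1 + a / 8 + a ^ 2 / 32) := by
          rw [div_eq_mul_inv]; exact mul_le_mul_of_nonneg_left hinv hS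
  have hτ := mul_le_mul_of_nonneg_right (half_add_sub_le_tauCoeff_half hN hθ₁) hS
  set g := δ * θ ^ 2 / (16 * N) - (K / (N - 1)) ^ 2 * θ ^ 4 / 32 - a ^ 2 / 64
  have hc : 0 ≤ δ / (32 * N) * θ ^ 2 :=
    mul_nonneg ((by positivity : (0 : ℝ) ≤ _).trans hθ₃) (sq_nonneg θ)
  have hg : δ / (32 * N) * θ ^ 2 ≤ g := by
    have hθ₃' := mul_le_mul_of_nonneg_right hθ₃ (sq_nonneg θ)
    have : g - δ / (32 * N) * θ ^ 2 = δ / (32 * N) * θ ^ 2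
        - ((K / (N - 1)) ^ 2 / 32 + ((K - δ) / N) ^ 2 / 64) * θ ^ 2 * θ ^ 2 := by
      simp only [g, a]; ring
    linarith
  have hSg : g ≤ S * g := le_mul_of_one_le_left (hc.trans hg) hsum
  have hsplit : S * g = S * (1 / 2 + K * θ ^ 2 / (16 * N) - (K / (N - 1)) ^ 2 * θ ^ 4 / 32)
      - S * (1 + a / 8 + a ^ 2 / 32) / 2 := by
    simp only [g, a]; ring
  linarith

/-- One-dimensional content of Proposition 3.2: there are `λ₁ > 0` and `c > 0`
such that, for `0 < λ ≤ λ₁`, any nonnegative `C²` solution of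
`f'' + ((K-δ)λ²/N) f ≥ 0` with `f(0) + f(1) ≥ 1` satisfies
`f(1/2) ≤ τ_{K,N}^{(1/2)}(λ)(f(0) + f(1)) - cλ²`. -/
theorem stmt_8 (K N δ : ℝ) (hN : 1 < N) (hδ : 0 < δ) :
    ∃ lam₁ > (0 : ℝ), ∃ c > (0 : ℝ), ∀ lam : ℝ, 0 < lam → lam ≤ lam₁ →
      ∀ f f' f'' : ℝ → ℝ,
        ContinuousOn f (Set.Icc 0 1) →
        (∀ s ∈ Set.Ioo (0 : ℝ) 1, HasDerivAt f (f' s) s) →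
        (∀ s ∈ Set.Ioo (0 : ℝ) 1, HasDerivAt f' (f'' s) s) →
        ContinuousOn f'' (Set.Ioo 0 1) →
        (∀ s ∈ Set.Icc (0 : ℝ) 1, 0 ≤ f s) →
        1 ≤ f 0 + f 1 →
        (∀ s ∈ Set.Ioo (0 : ℝ) 1, 0 ≤ f'' s + ((K - δ) * lam ^ 2 / N) * f s) →
        f (1 / 2) ≤ tauCoeff K N (1 / 2) lam * (f 0 + f 1) - c * lam ^ 2 := by
  have hN₀ : 0 < N := by linarith
  set A := (K / (N - 1)) ^ 2 / 32 + ((K - δ) / N) ^ 2 / 64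
  set B := |K / (N - 1)| + |K - δ| / N + 32 * N / δ * A
  have hA : 0 ≤ A := by positivity
  have hB : 0 ≤ B := by positivity
  refine ⟨(1 + B)⁻¹, by positivity, δ / (32 * N), by positivity, ?_⟩
  intro lam hlam hlam₁ f f' f'' hf hf' hf'' _ hf₀ hsum hode
  have hBlam : B * lam ^ 2 ≤ 1 := by
    have := mul_le_mul_of_nonneg_right hlam₁ (by positivity : 0 ≤ 1 + B)
    rw [inv_mul_cancel₀ (by positivity)] at this
    nlinarith
  simp only [B, add_mul] at hBlam
  have h₁ : 0 ≤ |K / (N - 1)| * lam ^ 2 := by positivity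
  have h₂ : 0 ≤ |K - δ| / N * lam ^ 2 := by positivity
  have h₃ : 0 ≤ 32 * N / δ * A * lam ^ 2 := by positivity
  refine apply_half_le_tauCoeff_half_mul_sub hN (by linarith) ?_ ?_ hf hf' hf'' hf₀ hsum hode
  · calc (K - δ) * lam ^ 2 / N = (K - δ) / N * lam ^ 2 := by ring
      _ ≤ |K - δ| / N * lam ^ 2 := by gcongr; exact le_abs_self _
      _ ≤ 4 := by linarith
  · calc A * lam ^ 2 = δ / (32 * N) * (32 * N / δ * A * lam ^ 2) := by field_simp
      _ ≤ δ / (32 * N) := mul_le_of_le_one_right (by positivity) (by linarith)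
end
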